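/- Let α ∈ ℝ, v ≠ 0, m > 0, and let DF(v,m) be the 2×2 matrix [[m^{-α} v, -(α/2) m^{-1-α} v²], [-m^{1-α}, -(1-α) m^{-α} v]]. Then the eigenvalues of DF(v,m) are λ₁ = (α - √(4 - 2α + α²)) v/(2m^α) and λ₂ = (α + √(4 - 2α + α²)) v/(2m^α), and these are distinct; i.e., the characteristic polynomial of DF(v,m) factors as (λ - λ₁)(λ - λ₂) with λ₁ ≠ λ₂. -/

import Mathlib

/-- The Jacobian DF(v,m) of the flux F(v,m) = (v²/(2 m^α), -v m^{1-α}). -/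
noncomputable def DF (α v m : ℝ) : Matrix (Fin 2) (Fin 2) ℝ :=
  !![m ^ (-α) * v, -(α / 2) * m ^ (-1 - α) * v ^ 2;
     -(m ^ (1 - α)), -(1 - α) * m ^ (-α) * v]

/-!
For a 2 × 2 matrix, `det (t • 1 - A) = t² - (tr A) t + det A`, so by Vieta it suffices that
λ₁ + λ₂ = tr DF = α v / m^α and λ₁ λ₂ = det DF = (α - 2) v² / (2 m^{2α}); the latter is exactly
the identity α² - (4 - 2α + α²) = 2(α - 2). The roots differ by √(4 - 2α + α²) · v / m^α ≠ 0,
the radicand being (α - 1)² + 3.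
-/

namespace Matrix

theorem det_smul_one_sub_fin_two {R : Type*} [CommRing R]
    (A : Matrix (Fin 2) (Fin 2) R) (t : R) :
    det (t • (1 : Matrix (Fin 2) (Fin 2) R) - A) = t ^ 2 - A.trace * t + A.det := by
  simp only [det_fin_two, trace_fin_two, sub_apply, smul_apply, one_apply_eq, ne_eq,
    zero_ne_one, one_ne_zero, not_false_eq_true, one_apply_ne, smul_eq_mul, mul_one, mul_zero]
  ring

theorem det_smul_one_sub_fin_two_eq_mul {R : Type*} [CommRing R]
    {A : Matrix (Fin 2) (Fin 2) R} {a b : R} (hsum : a + b = A.trace) (hprod : a * b = A.det)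
    (t : R) :
    det (t • (1 : Matrix (Fin 2) (Fin 2) R) - A) = (t - a) * (t - b) := by
  rw [det_smul_one_sub_fin_two, ← hsum, ← hprod]
  ring

end Matrix

theorem Real.rpow_neg_one_sub_mul_rpow_one_sub {m : ℝ} (hm : 0 < m) (α : ℝ) :
    m ^ (-1 - α) * m ^ (1 - α) = (m ^ α)⁻¹ ^ 2 := by
  rw [← Real.rpow_add hm, show -1 - α + (1 - α) = -α + -α by ring, Real.rpow_add hm,
    Real.rpow_neg hm.le, sq]

theorem DF_trace (α v : ℝ) {m : ℝ} (hm : 0 < m) : (DF α v m).trace = α * v / m ^ α := by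
  rw [DF, Matrix.trace_fin_two_of, Real.rpow_neg hm.le]
  ring

theorem DF_det (α v : ℝ) {m : ℝ} (hm : 0 < m) :
    (DF α v m).det = (α - 2) * v ^ 2 / (2 * (m ^ α) ^ 2) := by
  rw [DF, Matrix.det_fin_two_of, Real.rpow_neg hm.le]
  linear_combination (-(α / 2 * v ^ 2)) * Real.rpow_neg_one_sub_mul_rpow_one_sub hm α

theorem four_sub_two_mul_add_sq_pos (α : ℝ) : 0 < 4 - 2 * α + α ^ 2 := by
  nlinarith [sq_nonneg (α - 1)]

/-- for v ≠ 0 and m > 0 the eigenvalues of DF(v,m) are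
λ₁ = (α - √(4 - 2α + α²)) v/(2 m^α), λ₂ = (α + √(4 - 2α + α²)) v/(2 m^α); the
characteristic polynomial factors as (λ - λ₁)(λ - λ₂) and λ₁ ≠ λ₂. -/
theorem DF_eigenvalues (α v m : ℝ) (hv : v ≠ 0) (hm : 0 < m) :
    (∀ t : ℝ,
      Matrix.det (t • (1 : Matrix (Fin 2) (Fin 2) ℝ) - DF α v m)
        = (t - (α - Real.sqrt (4 - 2 * α + α ^ 2)) * v / (2 * m ^ α))
          * (t - (α + Real.sqrt (4 - 2 * α + α ^ 2)) * v / (2 * m ^ α))) ∧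
    (α - Real.sqrt (4 - 2 * α + α ^ 2)) * v / (2 * m ^ α)
      ≠ (α + Real.sqrt (4 - 2 * α + α ^ 2)) * v / (2 * m ^ α) := by
  set s := √(4 - 2 * α + α ^ 2)
  have hs : 0 < s := Real.sqrt_pos.mpr (four_sub_two_mul_add_sq_pos α)
  have hs2 : s ^ 2 = 4 - 2 * α + α ^ 2 := Real.sq_sqrt (four_sub_two_mul_add_sq_pos α).le
  have hM : 0 < m ^ α := Real.rpow_pos_of_pos hm α
  refine ⟨Matrix.det_smul_one_sub_fin_two_eq_mul ?_ ?_, ?_⟩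
  · rw [DF_trace α v hm]
    field_simp
    ring
  · rw [DF_det α v hm]
    field_simp
    linear_combination -hs2
  · intro h
    field_simp at h
    exact hs.ne' (by linarith)
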